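/- arXiv:1810.03535 — 4 statements merged into one kernel-verified Lean document; each statement's English description precedes it below -/
import Mathlib

section
/- For every right-continuous nonincreasing probability density f on [0,1], the weighted square integral satisfies ∫₀¹ f(x)²·x dx ≤ 1/2. -/
open MeasureTheory Set
open scoped ENNReal

/-!
As `f` is nonincreasing, `f x * x ≤ F x := ∫₀ˣ f`, so `∫ f² x ≤ ∫ f F`. By Tonelli,
`∫ f F` is the integral of `f x * f y` over `{y ≤ x}`; by symmetry, and since the diagonal is
null, this is half the integral over the whole square, i.e. `(∫ f)² / 2 = 1 / 2`.
-/

section Order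

variable {α : Type*} [MeasurableSpace α] [TopologicalSpace α] [LinearOrder α] [OrderTopology α]
  [SecondCountableTopology α] [BorelSpace α] {μ : Measure α} {g : α → ℝ≥0∞}

theorem lintegral_mul_setLIntegral_Ici_eq_Iic [SFinite μ] (hg : AEMeasurable g μ) :
    ∫⁻ x, g x * ∫⁻ y in Ici x, g y ∂μ ∂μ = ∫⁻ y, g y * ∫⁻ x in Iic y, g x ∂μ ∂μ := by
  set K : α → α → ℝ≥0∞ := fun x y =>
    {p : α × α | p.1 ≤ p.2}.indicator (fun p => g p.1 * g p.2) (x, y)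
  have hK : AEMeasurable (Function.uncurry K) (μ.prod μ) :=
    (hg.comp_fst.mul hg.comp_snd).indicator (measurableSet_le measurable_fst measurable_snd)
  have hleft : ∀ x, g x * ∫⁻ y in Ici x, g y ∂μ = ∫⁻ y, K x y ∂μ := fun x => by
    rw [← lintegral_const_mul'' _ hg.restrict, ← lintegral_indicator measurableSet_Ici]
    rfl
  have hright : ∀ y, g y * ∫⁻ x in Iic y, g x ∂μ = ∫⁻ x, K x y ∂μ := fun y => by
    rw [mul_comm, ← lintegral_mul_const'' _ hg.restrict,
      ← lintegral_indicator measurableSet_Iic]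
    rfl
  simp_rw [hleft, hright]
  exact lintegral_lintegral_swap hK

theorem two_mul_lintegral_mul_setLIntegral_Iic [SFinite μ] [NullSingletonClass μ]
    (hg : AEMeasurable g μ) :
    2 * ∫⁻ x, g x * ∫⁻ y in Iic x, g y ∂μ ∂μ = (∫⁻ x, g x ∂μ) ^ 2 := by
  have hIio : ∀ x, ∫⁻ y in Iic x, g y ∂μ = ∫⁻ y in Iio x, g y ∂μ := fun x =>
    setLIntegral_congr Iio_ae_eq_Iic.symm
  have hsplit (x : α) : ∫⁻ y in Iio x, g y ∂μ + ∫⁻ y in Ici x, g y ∂μ = ∫⁻ y, g y ∂μ := by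
    rw [← compl_Iio]
    exact lintegral_add_compl _ measurableSet_Iio
  have hmeas : Measurable fun x => ∫⁻ y in Iio x, g y ∂μ :=
    Monotone.measurable fun x x' hxx' => lintegral_mono_set (Iio_subset_Iio hxx')
  calc 2 * ∫⁻ x, g x * ∫⁻ y in Iic x, g y ∂μ ∂μ
      = ∫⁻ x, g x * ∫⁻ y in Iio x, g y ∂μ ∂μ
          + ∫⁻ x, g x * ∫⁻ y in Ici x, g y ∂μ ∂μ := by
        rw [two_mul, lintegral_mul_setLIntegral_Ici_eq_Iic hg]
        simp_rw [hIio]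
    _ = ∫⁻ x, g x * ∫⁻ y, g y ∂μ ∂μ := by
        rw [← lintegral_add_left' (f := fun x => g x * ∫⁻ y in Iio x, g y ∂μ)
          (hg.mul hmeas.aemeasurable)]
        simp_rw [← mul_add, hsplit]
    _ = (∫⁻ x, g x ∂μ) ^ 2 := by rw [lintegral_mul_const'' _ hg, sq]

end Order

theorem AntitoneOn.ofReal_mul_le_setLIntegral_Ioc {f : ℝ → ℝ} {a b x : ℝ}
    (hf : AntitoneOn f (Ioc a b)) (hx : x ∈ Ioc a b) :
    ENNReal.ofReal (f x) * ENNReal.ofReal (x - a)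
      ≤ ∫⁻ y in Ioc a x, ENNReal.ofReal (f y) := by
  rw [← Real.volume_Ioc, ← setLIntegral_const]
  refine setLIntegral_mono' measurableSet_Ioc fun y hy => ?_
  exact ENNReal.ofReal_le_ofReal (hf ⟨hy.1, hy.2.trans hx.2⟩ hx hy.2)

theorem grenander_weighted_square_le_half_general
    (f : ℝ → ℝ)
    (hnn : ∀ x ∈ Ioc (0:ℝ) 1, 0 ≤ f x)
    (hanti : AntitoneOn f (Ioc 0 1))
    (hint : IntegrableOn f (Ioc 0 1))
    (htot : ∫ x in Ioc (0:ℝ) 1, f x = 1) :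
    ∫⁻ x in Ioc (0:ℝ) 1, ENNReal.ofReal ((f x) ^ 2 * x) ≤ 1 / 2 := by
  set μ := volume.restrict (Ioc (0:ℝ) 1)
  have hmass : ∫⁻ x, ENNReal.ofReal (f x) ∂μ = 1 := by
    rw [← ofReal_integral_eq_lintegral_ofReal hint
      (ae_restrict_of_forall_mem measurableSet_Ioc hnn), htot, ENNReal.ofReal_one]
  have hpointwise : ∀ x ∈ Ioc (0:ℝ) 1, ENNReal.ofReal (f x ^ 2 * x)
      ≤ ENNReal.ofReal (f x) * ∫⁻ y in Iic x, ENNReal.ofReal (f y) ∂μ := fun x hx => by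
    rw [Measure.restrict_restrict measurableSet_Iic, Iic_inter_Ioc_of_le hx.2, sq, mul_assoc,
      ENNReal.ofReal_mul (hnn x hx), ENNReal.ofReal_mul (hnn x hx)]
    gcongr
    simpa using hanti.ofReal_mul_le_setLIntegral_Ioc hx
  have hg : AEMeasurable (fun x => ENNReal.ofReal (f x)) μ :=
    ENNReal.measurable_ofReal.comp_aemeasurable hint.aemeasurable
  calc ∫⁻ x in Ioc (0:ℝ) 1, ENNReal.ofReal (f x ^ 2 * x)
      ≤ ∫⁻ x, ENNReal.ofReal (f x) * ∫⁻ y in Iic x, ENNReal.ofReal (f y) ∂μ ∂μ :=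
        setLIntegral_mono' measurableSet_Ioc hpointwise
    _ = 1 / 2 := by
        rw [ENNReal.eq_div_iff two_ne_zero ENNReal.ofNat_ne_top,
          two_mul_lintegral_mul_setLIntegral_Iic hg, hmass, one_pow]

/-- **Lemma 2.2.** For every right-continuous nonincreasing probability density `f` on `[0,1]`,
the weighted square integral satisfies `∫₀¹ f(x)² · x dx ≤ 1/2`. -/
theorem grenander_weighted_square_le_half
    (f : ℝ → ℝ)
    (hnn : ∀ x ∈ Ioc (0:ℝ) 1, 0 ≤ f x)
    (hanti : AntitoneOn f (Ioc 0 1))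
    (hrc : ∀ x ∈ Ioo (0:ℝ) 1, ContinuousWithinAt f (Ici x) x)
    (hint : IntegrableOn f (Ioc 0 1))
    (htot : ∫ x in Ioc (0:ℝ) 1, f x = 1) :
    ∫⁻ x in Ioc (0:ℝ) 1, ENNReal.ofReal ((f x) ^ 2 * x) ≤ 1 / 2 :=
  grenander_weighted_square_le_half_general f hnn hanti hint htot
end

section
/- Let f and g be right-continuous nonincreasing probability densities on [0,1] with cumulative distribution functions F(x) = ∫₀ˣ f(y) dy and G(x) = ∫₀ˣ g(y) dy (so F(0) = G(0) = 0 and F(1) = G(1) = 1). Then the weighted integrated square distance between the densities is controlled by the sup-distance between the distribution functions: ∫₀¹ (g(x−) − f(x−))²·x dx ≤ 2·sup_{0 ≤ x ≤ 1} |G(x) − F(x)|, where g(x−) and f(x−) denote left limits. -/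
open MeasureTheory Set Filter Function

/-!
Write `h = g - f`, `D = G - F` and, for a density `φ` with CDF `Φ`, `U_φ(x) = Φ(x) - x φ(x)`: the
value at `0` of the tangent at `x` to the concave function `Φ`, nondecreasing in `x` with values in
`[0, 1]`. On `(0, 1]`, `(g - f)² x = h D + h U_f - h U_g`. Since `D(0) = D(1) = 0`,
`∫ h D = D(1)² / 2 = 0`. By the layer-cake formula, `∫ h U_φ` is an average over `t ∈ (0, 1)` of
the integrals of `h` over the superlevel sets `{U_φ > t}`; these are final intervals `(c, 1]`, over
which `h` integrates to `-D(c)`, so `|∫ h U_φ| ≤ sup |D|`. Finally, left limits of the monotone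
densities differ from the densities only on a countable set.
-/

theorem MonotoneOn.exists_setOf_lt_ae_eq_Ioc {U : ℝ → ℝ} {a b : ℝ} (hab : a ≤ b)
    (hU : MonotoneOn U (Ioc a b)) (t : ℝ) :
    ∃ c ∈ Icc a b, {x | t < U x} =ᵐ[volume.restrict (Ioc a b)] Ioc c b := by
  set S := {x ∈ Ioc a b | t < U x}
  -- `b` is inserted so that the infimum is not the junk value `sInf ∅ = 0` when `S = ∅`
  set c := sInf (insert b S)
  have hbdd : BddBelow (insert b S) := ⟨a, by rintro x (rfl | hx) <;> [exact hab; exact hx.1.1.le]⟩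
  have hc : c ∈ Icc a b := by
    refine ⟨le_csInf (insert_nonempty _ _) ?_, csInf_le hbdd (mem_insert _ _)⟩
    rintro x (rfl | hx)
    exacts [hab, hx.1.1.le]
  refine ⟨c, hc, eventuallyEq_set.2 ?_⟩
  filter_upwards [ae_restrict_mem measurableSet_Ioc,
    ae_restrict_of_ae (compl_mem_ae_iff.2 (measure_singleton c))] with x hx hxc
  refine ⟨fun htx => ⟨(csInf_le hbdd (mem_insert_of_mem _ ⟨hx, htx⟩)).lt_of_ne (Ne.symm hxc),
    hx.2⟩, fun hcx => ?_⟩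
  obtain ⟨z, hz | hz, hzx⟩ := exists_lt_of_csInf_lt (insert_nonempty _ _) hcx.1
  · exact absurd hx.2 (hz ▸ hzx).not_ge
  · exact hz.2.trans_le (hU hz.1 hx hzx.le)

theorem abs_setIntegral_mul_le_of_monotoneOn {a b M δ : ℝ} {h U : ℝ → ℝ} (hab : a < b)
    (hh : IntegrableOn h (Ioc a b)) (hU : MonotoneOn U (Ioc a b))
    (hUM : ∀ x ∈ Ioc a b, U x ∈ Icc 0 M) (htail : ∀ c ∈ Icc a b, |∫ x in Ioc c b, h x| ≤ δ) :
    |∫ x in Ioc a b, h x * U x| ≤ M * δ := by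
  set μ := volume.restrict (Ioc a b)
  set ν := volume.restrict (Ioc 0 M)
  have hM : 0 ≤ M := (hUM b ⟨hab, le_rfl⟩).1.trans (hUM b ⟨hab, le_rfl⟩).2
  -- layer cake: `U x = ν {t | t < U x}`; factoring through `χ` makes `(x, t) ↦ χ (U x, t)`
  -- a.e.-measurable although `U` is only a.e.-measurable
  set χ : ℝ × ℝ → ℝ := {q | q.2 < q.1}.indicator 1
  set Φ : ℝ → ℝ → ℝ := fun x t => h x * χ (U x, t)
  have hlayer : ∀ x ∈ Ioc a b, ∫ t, Φ x t ∂ν = h x * U x := by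
    intro x hx
    have hχx : (fun t => χ (U x, t)) = (Iio (U x)).indicator 1 := by
      ext t; simp [χ, indicator_apply]
    have hcut : Iio (U x) ∩ Ioc 0 M = Ioo 0 (U x) := by
      ext t
      simp only [mem_inter_iff, mem_Iio, mem_Ioc, mem_Ioo]
      exact ⟨fun ht => ⟨ht.2.1, ht.1⟩, fun ht => ⟨ht.2, ht.1, ht.2.le.trans (hUM x hx).2⟩⟩
    rw [integral_const_mul, hχx, integral_indicator_one measurableSet_Iio,
      measureReal_restrict_apply measurableSet_Iio, hcut, Real.volume_real_Ioo_of_le (hUM x hx).1,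
      sub_zero]
  have hslice : ∀ t, ‖∫ x, Φ x t ∂μ‖ ≤ δ := by
    intro t
    obtain ⟨c, hc, hae⟩ := hU.exists_setOf_lt_ae_eq_Ioc hab.le t
    have hΦ : (fun x => Φ x t) = {x | t < U x}.indicator h := by
      ext x; simp [Φ, χ, indicator_apply]
    rw [hΦ, integral_congr_ae (indicator_ae_eq_of_ae_eq_set hae),
      integral_indicator measurableSet_Ioc,
      Measure.restrict_restrict_of_subset (Ioc_subset_Ioc_left hc.1), Real.norm_eq_abs]
    exact htail c hc
  have hint : Integrable (uncurry Φ) (μ.prod ν) := by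
    refine Integrable.mono' (hh.norm.mul_prod (integrable_const (1 : ℝ))) ?_
      (ae_of_all _ fun p => ?_)
    · have hχ : Measurable χ :=
        measurable_const.indicator (measurableSet_lt measurable_snd measurable_fst)
      exact hh.aestronglyMeasurable.comp_fst.mul (hχ.comp_aemeasurable
        ((aemeasurable_restrict_of_monotoneOn measurableSet_Ioc hU).comp_fst.prodMk
          measurable_snd.aemeasurable)).aestronglyMeasurable
    · simp only [uncurry, Φ, χ, norm_mul, indicator_apply]
      split_ifs <;> simp
  calc |∫ x in Ioc a b, h x * U x| = ‖∫ t, ∫ x, Φ x t ∂μ ∂ν‖ := by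
        rw [← integral_integral_swap hint, Real.norm_eq_abs,
          integral_congr_ae ((ae_restrict_mem measurableSet_Ioc).mono hlayer)]
    _ ≤ δ * ν.real univ := norm_integral_le_of_norm_le_const (ae_of_all _ hslice)
    _ = M * δ := by
      rw [measureReal_restrict_apply_univ, Real.volume_real_Ioc_of_le hM, sub_zero, mul_comm]

theorem integral_mul_setIntegral_Iic_eq_sq_div_two {μ : Measure ℝ} [SFinite μ]
    [NullSingletonClass μ] {h : ℝ → ℝ} (hh : Integrable h μ) :
    ∫ x, h x * ∫ y in Iic x, h y ∂μ ∂μ = (∫ x, h x ∂μ) ^ 2 / 2 := by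
  set k : ℝ × ℝ → ℝ := fun p => h p.1 * h p.2
  have hk : Integrable k (μ.prod μ) := hh.mul_prod hh
  set below : Set (ℝ × ℝ) := {p | p.2 ≤ p.1}
  set strictBelow : Set (ℝ × ℝ) := {p | p.2 < p.1}
  have hbelow : MeasurableSet below := measurableSet_le measurable_snd measurable_fst
  have hstrict : MeasurableSet strictBelow := measurableSet_lt measurable_snd measurable_fst
  have hIic : ∫ p, below.indicator k p ∂μ.prod μ = ∫ x, h x * ∫ y in Iic x, h y ∂μ ∂μ := by
    rw [integral_prod _ (hk.indicator hbelow)]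
    congr 1 with x
    rw [← integral_const_mul, ← integral_indicator measurableSet_Iic]
    congr 1
  have hIio : ∫ p, strictBelow.indicator k p ∂μ.prod μ = ∫ x, h x * ∫ y in Iic x, h y ∂μ ∂μ := by
    rw [integral_prod _ (hk.indicator hstrict)]
    congr 1 with x
    rw [← setIntegral_congr_set Iio_ae_eq_Iic, ← integral_const_mul,
      ← integral_indicator measurableSet_Iio]
    congr 1
  have hswap : ∫ p, strictBelow.indicator k p ∂μ.prod μ = ∫ p, belowᶜ.indicator k p ∂μ.prod μ := by
    rw [← integral_prod_swap]
    congr 1 with p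
    simp [below, strictBelow, k, indicator_apply, mul_comm]
  have hsplit := integral_add (hk.indicator hbelow) (hk.indicator hbelow.compl)
  simp only [indicator_self_add_compl_apply] at hsplit
  rw [integral_prod_mul (f := h) (g := h), hIic, ← hswap, hIio] at hsplit
  linarith

theorem setIntegral_Ioc_mul_setIntegral_Ioc_eq_sq_div_two {h : ℝ → ℝ} {a b : ℝ}
    (hh : IntegrableOn h (Ioc a b)) :
    ∫ x in Ioc a b, h x * ∫ y in Ioc a x, h y = (∫ x in Ioc a b, h x) ^ 2 / 2 := by
  rw [← integral_mul_setIntegral_Iic_eq_sq_div_two hh]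
  refine setIntegral_congr_fun measurableSet_Ioc fun x hx => ?_
  rw [Measure.restrict_restrict measurableSet_Iic, Iic_inter_Ioc_of_le hx.2]

theorem setIntegral_Ioc_eq_neg_of_setIntegral_eq_zero {h : ℝ → ℝ} {a b c : ℝ}
    (hh : IntegrableOn h (Ioc a b)) (h0 : ∫ x in Ioc a b, h x = 0) (hc : c ∈ Icc a b) :
    ∫ x in Ioc c b, h x = -∫ x in Ioc a c, h x := by
  rw [eq_neg_iff_add_eq_zero, add_comm, ← setIntegral_union (Ioc_disjoint_Ioc_of_le le_rfl)
    measurableSet_Ioc (hh.mono_set (Ioc_subset_Ioc_right hc.2))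
    (hh.mono_set (Ioc_subset_Ioc_left hc.1)), Ioc_union_Ioc_eq_Ioc hc.1 hc.2, h0]

section TangentIntercept

variable {φ : ℝ → ℝ} {a b : ℝ}

theorem monotoneOn_setIntegral_Ioc_sub (hφ : AntitoneOn φ (Ioc a b))
    (hint : IntegrableOn φ (Ioc a b)) :
    MonotoneOn (fun x => ∫ y in Ioc a x, (φ y - φ x)) (Ioc a b) := by
  intro x hx x' hx' hxx'
  have hint' : ∀ {u v}, u ∈ Icc a b → v ≤ b → IntegrableOn (fun y => φ y - φ x') (Ioc u v) :=
    fun hu hv => (hint.mono_set (Ioc_subset_Ioc hu.1 hv)).sub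
      (integrableOn_const measure_Ioc_lt_top.ne)
  have ha : a ∈ Icc a b := left_mem_Icc.2 (hx.1.le.trans hx.2)
  have hshift : ∫ y in Ioc a x, (φ y - φ x) ≤ ∫ y in Ioc a x, (φ y - φ x') :=
    setIntegral_mono_on ((hint.mono_set (Ioc_subset_Ioc_right hx.2)).sub
      (integrableOn_const measure_Ioc_lt_top.ne)) (hint' ha hx.2) measurableSet_Ioc
      fun y _ => by linarith [hφ hx hx' hxx']
  have hnew : 0 ≤ ∫ y in Ioc x x', (φ y - φ x') :=
    setIntegral_nonneg measurableSet_Ioc fun y hy =>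
      sub_nonneg.2 (hφ ⟨hx.1.trans hy.1, hy.2.trans hx'.2⟩ hx' hy.2)
  simp only
  rw [← Ioc_union_Ioc_eq_Ioc hx.1.le hxx', setIntegral_union (Ioc_disjoint_Ioc_of_le le_rfl)
    measurableSet_Ioc (hint' ha hx.2) (hint' ⟨hx.1.le, hx.2⟩ hx'.2)]
  linarith

theorem setIntegral_Ioc_sub_mem_Icc (hφ : AntitoneOn φ (Ioc a b))
    (hint : IntegrableOn φ (Ioc a b)) (hb : 0 ≤ φ b) {x : ℝ} (hx : x ∈ Ioc a b) :
    ∫ y in Ioc a x, (φ y - φ x) ∈ Icc 0 (∫ y in Ioc a b, φ y) := by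
  refine ⟨setIntegral_nonneg measurableSet_Ioc fun y hy =>
    sub_nonneg.2 (hφ ⟨hy.1, hy.2.trans hx.2⟩ hx hy.2), ?_⟩
  calc ∫ y in Ioc a x, (φ y - φ x) ≤ ∫ y in Ioc a b, (φ y - φ b) :=
        monotoneOn_setIntegral_Ioc_sub hφ hint hx ⟨hx.1.trans_le hx.2, le_rfl⟩ hx.2
    _ ≤ ∫ y in Ioc a b, φ y :=
        setIntegral_mono_on (hint.sub (integrableOn_const measure_Ioc_lt_top.ne)) hint
          measurableSet_Ioc fun y _ => by linarith

theorem setIntegral_Ioc_sub_eq (hint : IntegrableOn φ (Ioc a b)) {x : ℝ} (hx : x ∈ Ioc a b) :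
    ∫ y in Ioc a x, (φ y - φ x) = (∫ y in Ioc a x, φ y) - (x - a) * φ x := by
  rw [integral_sub (hint.mono_set (Ioc_subset_Ioc_right hx.2))
    (integrableOn_const measure_Ioc_lt_top.ne), setIntegral_const,
    Real.volume_real_Ioc_of_le hx.1.le, smul_eq_mul]

theorem integrableOn_mul_setIntegral_Ioc_sub {h : ℝ → ℝ} (hh : IntegrableOn h (Ioc a b))
    (hφ : AntitoneOn φ (Ioc a b)) (hint : IntegrableOn φ (Ioc a b)) (hb : 0 ≤ φ b) :
    IntegrableOn (fun x => h x * ∫ y in Ioc a x, (φ y - φ x)) (Ioc a b) := by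
  refine hh.mul_bdd (c := ∫ y in Ioc a b, φ y) ?_ ?_
  · exact (aemeasurable_restrict_of_monotoneOn measurableSet_Ioc
      (monotoneOn_setIntegral_Ioc_sub hφ hint)).aestronglyMeasurable
  · filter_upwards [ae_restrict_mem measurableSet_Ioc] with x hx
    have hmem := setIntegral_Ioc_sub_mem_Icc hφ hint hb hx
    rw [Real.norm_eq_abs, abs_of_nonneg hmem.1]
    exact hmem.2

end TangentIntercept

theorem AntitoneOn.ae_leftLim_eq {φ : ℝ → ℝ} {a b : ℝ} (hφ : AntitoneOn φ (Ioc a b)) :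
    ∀ᵐ x ∂volume.restrict (Ioc a b), leftLim φ x = φ x := by
  rw [← Measure.restrict_congr_set Ioo_ae_eq_Ioc]
  filter_upwards [ae_restrict_mem measurableSet_Ioo,
    ae_restrict_of_ae (hφ.countable_not_continuousWithinAt.ae_notMem volume)] with x hx hcont
  have hwithin : ContinuousWithinAt φ (Ioc a b) x :=
    not_not.1 fun hnot => hcont ⟨Ioo_subset_Ioc_self hx, hnot⟩
  exact ((continuousWithinAt_iff_continuousAt (Ioc_mem_nhds hx.1 hx.2)).1
    hwithin).continuousWithinAt.leftLim_eq

theorem lintegral_sq_sub_mul_le {f g : ℝ → ℝ} {a b δ : ℝ} (hab : a < b)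
    (hf : AntitoneOn f (Ioc a b)) (hfint : IntegrableOn f (Ioc a b)) (hfb : 0 ≤ f b)
    (hg : AntitoneOn g (Ioc a b)) (hgint : IntegrableOn g (Ioc a b)) (hgb : 0 ≤ g b)
    (hmass : ∫ x in Ioc a b, f x = ∫ x in Ioc a b, g x)
    (hD : ∀ c ∈ Icc a b, |∫ x in Ioc a c, (g x - f x)| ≤ δ) :
    ∫⁻ x in Ioc a b, ENNReal.ofReal ((g x - f x) ^ 2 * (x - a))
      ≤ ENNReal.ofReal (((∫ x in Ioc a b, f x) + ∫ x in Ioc a b, g x) * δ) := by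
  set h : ℝ → ℝ := fun x => g x - f x
  set D : ℝ → ℝ := fun x => ∫ y in Ioc a x, h y
  set U : (ℝ → ℝ) → ℝ → ℝ := fun φ x => ∫ y in Ioc a x, (φ y - φ x)
  have hh : IntegrableOn h (Ioc a b) := hgint.sub hfint
  have hhtot : ∫ x in Ioc a b, h x = 0 := by rw [integral_sub hgint hfint, hmass, sub_self]
  have htail : ∀ c ∈ Icc a b, |∫ x in Ioc c b, h x| ≤ δ := fun c hc => by
    rw [setIntegral_Ioc_eq_neg_of_setIntegral_eq_zero hh hhtot hc, abs_neg]
    exact hD c hc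
  have hUbound : ∀ {φ}, AntitoneOn φ (Ioc a b) → IntegrableOn φ (Ioc a b) → 0 ≤ φ b →
      |∫ x in Ioc a b, h x * U φ x| ≤ (∫ x in Ioc a b, φ x) * δ := fun hφ hint hb =>
    abs_setIntegral_mul_le_of_monotoneOn hab hh (monotoneOn_setIntegral_Ioc_sub hφ hint)
      (fun _ hx => setIntegral_Ioc_sub_mem_Icc hφ hint hb hx) htail
  have hDint : IntegrableOn (fun x => h x * D x) (Ioc a b) := by
    refine hh.mul_bdd (c := δ) ?_ ?_
    · exact ((intervalIntegral.continuousOn_primitive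
        ((integrableOn_Icc_iff_integrableOn_Ioc).2 hh)).mono Ioc_subset_Icc_self).aestronglyMeasurable
        measurableSet_Ioc
    · filter_upwards [ae_restrict_mem measurableSet_Ioc] with x hx
      exact hD x ⟨hx.1.le, hx.2⟩
  have hD0 : ∫ x in Ioc a b, h x * D x = 0 := by
    rw [setIntegral_Ioc_mul_setIntegral_Ioc_eq_sq_div_two hh, hhtot]
    norm_num
  have hdecomp : EqOn (fun x => (g x - f x) ^ 2 * (x - a))
      (fun x => h x * D x + h x * U f x - h x * U g x) (Ioc a b) := by
    intro x hx
    simp only [D, U, h, setIntegral_Ioc_sub_eq hfint hx, setIntegral_Ioc_sub_eq hgint hx,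
      integral_sub (hgint.mono_set (Ioc_subset_Ioc_right hx.2))
        (hfint.mono_set (Ioc_subset_Ioc_right hx.2))]
    ring
  have hUf := integrableOn_mul_setIntegral_Ioc_sub hh hf hfint hfb
  have hUg := integrableOn_mul_setIntegral_Ioc_sub hh hg hgint hgb
  rw [← ofReal_integral_eq_lintegral_ofReal
    (((hDint.add hUf).sub hUg).congr_fun hdecomp.symm measurableSet_Ioc)]
  · refine ENNReal.ofReal_le_ofReal ?_
    rw [setIntegral_congr_fun measurableSet_Ioc hdecomp, integral_sub ?_ hUg,
      integral_add hDint hUf, hD0]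
    · linarith [(abs_le.1 (hUbound hf hfint hfb)).2, (abs_le.1 (hUbound hg hgint hgb)).1]
    · exact hDint.add hUf
  · filter_upwards [ae_restrict_mem measurableSet_Ioc] with x hx
    exact mul_nonneg (sq_nonneg _) (sub_nonneg.2 hx.1.le)

theorem grenander_weighted_L2_le_sup_cdf_general
    (f g F G : ℝ → ℝ)
    (hfnn : ∀ x ∈ Ioc (0:ℝ) 1, 0 ≤ f x)
    (hfanti : AntitoneOn f (Ioc 0 1))
    (hfint : IntegrableOn f (Ioc 0 1))
    (hftot : ∫ x in Ioc (0:ℝ) 1, f x = 1)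
    (hgnn : ∀ x ∈ Ioc (0:ℝ) 1, 0 ≤ g x)
    (hganti : AntitoneOn g (Ioc 0 1))
    (hgint : IntegrableOn g (Ioc 0 1))
    (hgtot : ∫ x in Ioc (0:ℝ) 1, g x = 1)
    (hF : ∀ x, F x = ∫ y in (0:ℝ)..x, f y)
    (hG : ∀ x, G x = ∫ y in (0:ℝ)..x, g y) :
    ∫⁻ x in Ioc (0:ℝ) 1, ENNReal.ofReal ((leftLim g x - leftLim f x) ^ 2 * x)
      ≤ ENNReal.ofReal (2 * ⨆ x : Icc (0:ℝ) 1, |G x.1 - F x.1|) := by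
  have hGF : ∀ c ∈ Icc (0:ℝ) 1, G c - F c = ∫ x in Ioc 0 c, (g x - f x) := fun c hc => by
    rw [hG, hF, intervalIntegral.integral_of_le hc.1, intervalIntegral.integral_of_le hc.1,
      integral_sub (hgint.mono_set (Ioc_subset_Ioc_right hc.2))
        (hfint.mono_set (Ioc_subset_Ioc_right hc.2))]
  have hcont : ContinuousOn (fun c => G c - F c) (Icc 0 1) :=
    (intervalIntegral.continuousOn_primitive
      ((integrableOn_Icc_iff_integrableOn_Ioc).2 (hgint.sub hfint))).congr hGF
  have hbdd : BddAbove (range fun x : Icc (0:ℝ) 1 => |G x.1 - F x.1|) :=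
    (isCompact_range hcont.domRestrict.abs).bddAbove
  have hsup : ∀ c ∈ Icc (0:ℝ) 1,
      |∫ x in Ioc 0 c, (g x - f x)| ≤ ⨆ x : Icc (0:ℝ) 1, |G x.1 - F x.1| :=
    fun c hc => hGF c hc ▸ le_ciSup hbdd ⟨c, hc⟩
  have hmain := lintegral_sq_sub_mul_le zero_lt_one hfanti hfint (hfnn 1 ⟨zero_lt_one, le_rfl⟩)
    hganti hgint (hgnn 1 ⟨zero_lt_one, le_rfl⟩) (hftot.trans hgtot.symm) hsup
  rw [hftot, hgtot, one_add_one_eq_two] at hmain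
  refine le_of_eq_of_le (lintegral_congr_ae ?_) hmain
  filter_upwards [hganti.ae_leftLim_eq, hfanti.ae_leftLim_eq] with x hgx hfx
  rw [hgx, hfx, sub_zero]

/-- **Inequality (2.18).** For two right-continuous nonincreasing probability densities `f`, `g`
on `[0,1]` with CDFs `F`, `G`, the weighted integrated square distance between the (left-limit
versions of the) densities is bounded by twice the sup-distance of the CDFs:
`∫₀¹ (g(x−) − f(x−))²·x dx ≤ 2·sup_{0≤x≤1} |G(x) − F(x)|`. -/
theorem grenander_weighted_L2_le_sup_cdf
    (f g F G : ℝ → ℝ)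
    (hfnn : ∀ x ∈ Ioc (0:ℝ) 1, 0 ≤ f x)
    (hfanti : AntitoneOn f (Ioc 0 1))
    (hfrc : ∀ x ∈ Ioo (0:ℝ) 1, ContinuousWithinAt f (Ici x) x)
    (hfint : IntegrableOn f (Ioc 0 1))
    (hftot : ∫ x in Ioc (0:ℝ) 1, f x = 1)
    (hgnn : ∀ x ∈ Ioc (0:ℝ) 1, 0 ≤ g x)
    (hganti : AntitoneOn g (Ioc 0 1))
    (hgrc : ∀ x ∈ Ioo (0:ℝ) 1, ContinuousWithinAt g (Ici x) x)
    (hgint : IntegrableOn g (Ioc 0 1))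
    (hgtot : ∫ x in Ioc (0:ℝ) 1, g x = 1)
    (hF : ∀ x, F x = ∫ y in (0:ℝ)..x, f y)
    (hG : ∀ x, G x = ∫ y in (0:ℝ)..x, g y) :
    ∫⁻ x in Ioc (0:ℝ) 1, ENNReal.ofReal ((leftLim g x - leftLim f x) ^ 2 * x)
      ≤ ENNReal.ofReal (2 * ⨆ x : Icc (0:ℝ) 1, |G x.1 - F x.1|) :=
  grenander_weighted_L2_le_sup_cdf_general f g F G hfnn hfanti hfint hftot hgnn hganti hgint hgtot
    hF hG
end

section
/- Let f and g be right-continuous nonincreasing probability densities on [0,1] with cumulative distribution functions F and G, set Ĝ = G − F and ĝ = g − f, and fix δ ∈ (0,1). Then |∫_δ¹ x·Ĝ(x) dĝ(x)| ≤ sup_{0 ≤ x ≤ 1} |Ĝ(x)| · [ δ·(g(δ) + f(δ)) + ∫_δ¹ (g(x) + f(x)) dx ], where dĝ is the signed Lebesgue–Stieltjes measure of ĝ on [δ,1]. -/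
open MeasureTheory Set Function
open scoped ENNReal

/-!
Write `x = δ + λ (δ, x)` and swap the order of integration: for any measure `μ`,
`∫_{(δ,1]} x dμ = δ μ (δ,1] + ∫_δ¹ μ (s,1] ds`. For the Stieltjes measure of a nonnegative
density, `μ (s,1] = f s - f 1 ≤ f s`, so `∫_{(δ,1]} x dμ ≤ δ f(δ) + ∫_δ¹ f`. As
`|x Ĝ(x)| ≤ x · sup |Ĝ|`, this bounds each of the two Stieltjes integrals separately.
-/

namespace MeasureTheory

variable {μ : Measure ℝ} {a b : ℝ}

theorem setLIntegral_Ioc_ofReal_sub_eq (hμ : μ (Ioc a b) ≠ ∞) :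
    ∫⁻ x in Ioc a b, ENNReal.ofReal (x - a) ∂μ = ∫⁻ s in Ioc a b, μ (Ioc s b) := by
  have : IsFiniteMeasure (μ.restrict (Ioc a b)) := isFiniteMeasure_restrict.2 hμ
  let kernel : ℝ → ℝ → ℝ≥0∞ := fun x s => (Iio x).indicator (1 : ℝ → ℝ≥0∞) s
  have hkernel : Measurable (uncurry kernel) :=
    measurable_const.indicator (measurableSet_lt measurable_snd measurable_fst)
  calc ∫⁻ x in Ioc a b, ENNReal.ofReal (x - a) ∂μ
      = ∫⁻ x in Ioc a b, (∫⁻ s in Ioc a b, kernel x s) ∂μ := by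
        refine setLIntegral_congr_fun measurableSet_Ioc fun x hx => ?_
        have : Iio x ∩ Ioc a b = Ioo a x := by
          ext s; simp only [mem_inter_iff, mem_Iio, mem_Ioc, mem_Ioo]; grind
        rw [lintegral_indicator_one measurableSet_Iio, Measure.restrict_apply measurableSet_Iio,
          this, Real.volume_Ioo]
    _ = ∫⁻ s in Ioc a b, ∫⁻ x in Ioc a b, kernel x s ∂μ :=
        lintegral_lintegral_swap hkernel.aemeasurable
    _ = ∫⁻ s in Ioc a b, μ (Ioc s b) := by
        refine setLIntegral_congr_fun measurableSet_Ioc fun s hs => ?_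
        have hind : (fun x => kernel x s) = (Ioi s).indicator 1 := by
          ext x; simp [kernel, indicator_apply]
        have : Ioi s ∩ Ioc a b = Ioc s b := by
          ext x; simp only [mem_inter_iff, mem_Ioi, mem_Ioc]; grind
        rw [hind, lintegral_indicator_one measurableSet_Ioi,
          Measure.restrict_apply measurableSet_Ioi, this]

variable {f : ℝ → ℝ}

theorem setLIntegral_Ioc_ofReal_le_of_measure_Ioc_eq (ha : 0 ≤ a) (hab : a ≤ b)
    (hfb : 0 ≤ f b) (hμ : ∀ s ∈ Icc a b, μ (Ioc s b) = ENNReal.ofReal (f s - f b)) :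
    ∫⁻ x in Ioc a b, ENNReal.ofReal x ∂μ
      ≤ ENNReal.ofReal a * ENNReal.ofReal (f a) + ∫⁻ s in Ioc a b, ENNReal.ofReal (f s) := by
  have hμIoc : ∀ s ∈ Icc a b, μ (Ioc s b) ≤ ENNReal.ofReal (f s) := fun s hs =>
    (hμ s hs).trans_le (ENNReal.ofReal_le_ofReal (by linarith))
  calc ∫⁻ x in Ioc a b, ENNReal.ofReal x ∂μ
      = ∫⁻ x in Ioc a b, (ENNReal.ofReal a + ENNReal.ofReal (x - a)) ∂μ := by
        refine setLIntegral_congr_fun measurableSet_Ioc fun x hx => ?_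
        rw [← ENNReal.ofReal_add ha (by linarith [hx.1]), add_sub_cancel]
    _ = ENNReal.ofReal a * μ (Ioc a b) + ∫⁻ s in Ioc a b, μ (Ioc s b) := by
        have hfin : μ (Ioc a b) ≠ ∞ := hμ a ⟨le_rfl, hab⟩ ▸ ENNReal.ofReal_ne_top
        rw [lintegral_add_left measurable_const, setLIntegral_const,
          setLIntegral_Ioc_ofReal_sub_eq hfin]
    _ ≤ ENNReal.ofReal a * ENNReal.ofReal (f a) + ∫⁻ s in Ioc a b, ENNReal.ofReal (f s) := by
        gcongr ?_ + ?_
        · exact mul_le_mul_right (hμIoc a ⟨le_rfl, hab⟩) _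
        · exact setLIntegral_mono' measurableSet_Ioc fun s hs => hμIoc s (Ioc_subset_Icc_self hs)

theorem setLIntegral_Ioc_ofReal_le_ofReal_of_measure_Ioc_eq (ha : 0 ≤ a) (hab : a ≤ b)
    (hf : ∀ x ∈ Icc a b, 0 ≤ f x) (hfint : IntegrableOn f (Ioc a b))
    (hμ : ∀ s ∈ Icc a b, μ (Ioc s b) = ENNReal.ofReal (f s - f b)) :
    ∫⁻ x in Ioc a b, ENNReal.ofReal x ∂μ
      ≤ ENNReal.ofReal (a * f a + ∫ x in Ioc a b, f x) := by
  have hfa := hf a ⟨le_rfl, hab⟩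
  have hf_ae : 0 ≤ᵐ[volume.restrict (Ioc a b)] f :=
    (ae_restrict_iff' measurableSet_Ioc).2 <| .of_forall fun x hx => hf x (Ioc_subset_Icc_self hx)
  rw [ENNReal.ofReal_add (mul_nonneg ha hfa) (integral_nonneg_of_ae hf_ae), ENNReal.ofReal_mul ha,
    ofReal_integral_eq_lintegral_ofReal hfint hf_ae]
  exact setLIntegral_Ioc_ofReal_le_of_measure_Ioc_eq ha hab (hf b ⟨hab, le_rfl⟩) hμ

theorem abs_setIntegral_Ioc_le_of_measure_Ioc_eq {H : ℝ → ℝ} {M : ℝ} (hM : 0 ≤ M)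
    (hH : ∀ x ∈ Ioc a b, |H x| ≤ M * x) (ha : 0 ≤ a) (hab : a ≤ b)
    (hf : ∀ x ∈ Icc a b, 0 ≤ f x) (hfint : IntegrableOn f (Ioc a b))
    (hμ : ∀ s ∈ Icc a b, μ (Ioc s b) = ENNReal.ofReal (f s - f b)) :
    |∫ x in Ioc a b, H x ∂μ| ≤ M * (a * f a + ∫ x in Ioc a b, f x) := by
  have hR : 0 ≤ a * f a + ∫ x in Ioc a b, f x :=
    add_nonneg (mul_nonneg ha (hf a ⟨le_rfl, hab⟩)) <|
      setIntegral_nonneg measurableSet_Ioc fun x hx => hf x (Ioc_subset_Icc_self hx)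
  refine (norm_integral_le_lintegral_norm H).trans <|
    ENNReal.toReal_le_of_le_ofReal (mul_nonneg hM hR) ?_
  calc ∫⁻ x in Ioc a b, ENNReal.ofReal ‖H x‖ ∂μ
      ≤ ∫⁻ x in Ioc a b, ENNReal.ofReal M * ENNReal.ofReal x ∂μ :=
        setLIntegral_mono' measurableSet_Ioc fun x hx => by
          rw [← ENNReal.ofReal_mul hM]; exact ENNReal.ofReal_le_ofReal (hH x hx)
    _ = ENNReal.ofReal M * ∫⁻ x in Ioc a b, ENNReal.ofReal x ∂μ :=
        lintegral_const_mul _ ENNReal.measurable_ofReal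
    _ ≤ ENNReal.ofReal (M * (a * f a + ∫ x in Ioc a b, f x)) := by
        rw [ENNReal.ofReal_mul hM]
        gcongr
        exact setLIntegral_Ioc_ofReal_le_ofReal_of_measure_Ioc_eq ha hab hf hfint hμ

end MeasureTheory

theorem continuousOn_Icc_primitive {f : ℝ → ℝ} {a b : ℝ} (hab : a ≤ b)
    (hf : IntegrableOn f (Ioc a b)) : ContinuousOn (fun x => ∫ t in a..x, f t) (Icc a b) := by
  rw [← uIcc_of_le hab]
  exact intervalIntegral.continuousOn_primitive_interval <| by
    rwa [uIcc_of_le hab, integrableOn_Icc_iff_integrableOn_Ioc]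

theorem abs_le_iSup_Icc_abs {φ : ℝ → ℝ} {a b x : ℝ} (hφ : ContinuousOn φ (Icc a b))
    (hx : x ∈ Icc a b) : |φ x| ≤ ⨆ y : Icc a b, |φ y| :=
  le_ciSup (isCompact_range (hφ.domRestrict.abs)).bddAbove (⟨x, hx⟩ : Icc a b)

theorem grenander_stieltjes_term_bound_general
    (f g F G : ℝ → ℝ) (δ : ℝ) (hδ : δ ∈ Ioo (0:ℝ) 1)
    (hfnn : ∀ x ∈ Ioc (0:ℝ) 1, 0 ≤ f x)
    (hfint : IntegrableOn f (Ioc 0 1))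
    (hgnn : ∀ x ∈ Ioc (0:ℝ) 1, 0 ≤ g x)
    (hgint : IntegrableOn g (Ioc 0 1))
    (hF : ∀ x, F x = ∫ y in (0:ℝ)..x, f y)
    (hG : ∀ x, G x = ∫ y in (0:ℝ)..x, g y)
    (μf μg : Measure ℝ)
    (hμf : ∀ a b : ℝ, δ ≤ a → a ≤ b → b ≤ 1 → μf (Ioc a b) = ENNReal.ofReal (f a - f b))
    (hμg : ∀ a b : ℝ, δ ≤ a → a ≤ b → b ≤ 1 → μg (Ioc a b) = ENNReal.ofReal (g a - g b)) :
    |(∫ x in Ioc δ 1, x * (G x - F x) ∂μf) - ∫ x in Ioc δ 1, x * (G x - F x) ∂μg|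
      ≤ (⨆ x : Icc (0:ℝ) 1, |G x.1 - F x.1|)
        * (δ * (g δ + f δ) + ∫ x in Ioc δ 1, (g x + f x)) := by
  obtain ⟨hδ0, hδ1⟩ := hδ
  set M := ⨆ x : Icc (0:ℝ) 1, |G x.1 - F x.1|
  have hGF : ContinuousOn (fun x => G x - F x) (Icc 0 1) := by
    rw [funext hF, funext hG]
    exact (continuousOn_Icc_primitive zero_le_one hgint).sub
      (continuousOn_Icc_primitive zero_le_one hfint)
  have hH : ∀ x ∈ Ioc δ 1, |x * (G x - F x)| ≤ M * x := fun x hx => by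
    have hx0 : 0 < x := hδ0.trans hx.1
    rw [abs_mul, abs_of_pos hx0, mul_comm]
    exact mul_le_mul_of_nonneg_right (abs_le_iSup_Icc_abs hGF ⟨hx0.le, hx.2⟩) hx0.le
  have hM0 : 0 ≤ M := Real.iSup_nonneg fun _ => abs_nonneg _
  have hIcc : Icc δ 1 ⊆ Ioc 0 1 := fun x hx => ⟨hδ0.trans_le hx.1, hx.2⟩
  have hIoc : Ioc δ 1 ⊆ Ioc 0 1 := Ioc_subset_Ioc_left hδ0.le
  have hboundf := abs_setIntegral_Ioc_le_of_measure_Ioc_eq hM0 hH hδ0.le hδ1.le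
    (fun x hx => hfnn x (hIcc hx)) (hfint.mono_set hIoc) fun s hs => hμf s 1 hs.1 hs.2 le_rfl
  have hboundg := abs_setIntegral_Ioc_le_of_measure_Ioc_eq hM0 hH hδ0.le hδ1.le
    (fun x hx => hgnn x (hIcc hx)) (hgint.mono_set hIoc) fun s hs => hμg s 1 hs.1 hs.2 le_rfl
  rw [integral_add (hgint.mono_set hIoc) (hfint.mono_set hIoc)]
  calc _ ≤ |∫ x in Ioc δ 1, x * (G x - F x) ∂μf| + |∫ x in Ioc δ 1, x * (G x - F x) ∂μg| :=
        abs_sub _ _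
    _ ≤ M * (δ * f δ + ∫ x in Ioc δ 1, f x) + M * (δ * g δ + ∫ x in Ioc δ 1, g x) :=
        add_le_add hboundf hboundg
    _ = _ := by ring

/-- **Bound (2.16).** For two right-continuous nonincreasing probability densities `f`, `g`
on `[0,1]` with CDFs `F`, `G`, writing `Ĝ = G − F` and `δ ∈ (0,1)`, one has
`|∫_δ¹ x·Ĝ(x) dĝ(x)| ≤ sup_{0≤x≤1} |Ĝ(x)| · [δ·(g(δ)+f(δ)) + ∫_δ¹ (g(x)+f(x)) dx]`,
where the signed Lebesgue–Stieltjes measure `dĝ = d(−f) − d(−g)` is encoded by the two measures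
`μf`, `μg` with `μf (a,b] = f a − f b` and `μg (a,b] = g a − g b` on `[δ,1]`. -/
theorem grenander_stieltjes_term_bound
    (f g F G : ℝ → ℝ) (δ : ℝ) (hδ : δ ∈ Ioo (0:ℝ) 1)
    (hfnn : ∀ x ∈ Ioc (0:ℝ) 1, 0 ≤ f x)
    (hfanti : AntitoneOn f (Ioc 0 1))
    (hfrc : ∀ x ∈ Ioo (0:ℝ) 1, ContinuousWithinAt f (Ici x) x)
    (hfint : IntegrableOn f (Ioc 0 1))
    (hftot : ∫ x in Ioc (0:ℝ) 1, f x = 1)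
    (hgnn : ∀ x ∈ Ioc (0:ℝ) 1, 0 ≤ g x)
    (hganti : AntitoneOn g (Ioc 0 1))
    (hgrc : ∀ x ∈ Ioo (0:ℝ) 1, ContinuousWithinAt g (Ici x) x)
    (hgint : IntegrableOn g (Ioc 0 1))
    (hgtot : ∫ x in Ioc (0:ℝ) 1, g x = 1)
    (hF : ∀ x, F x = ∫ y in (0:ℝ)..x, f y)
    (hG : ∀ x, G x = ∫ y in (0:ℝ)..x, g y)
    (μf μg : Measure ℝ)
    (hμf : ∀ a b : ℝ, δ ≤ a → a ≤ b → b ≤ 1 → μf (Ioc a b) = ENNReal.ofReal (f a - f b))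
    (hμg : ∀ a b : ℝ, δ ≤ a → a ≤ b → b ≤ 1 → μg (Ioc a b) = ENNReal.ofReal (g a - g b)) :
    |(∫ x in Ioc δ 1, x * (G x - F x) ∂μf) - ∫ x in Ioc δ 1, x * (G x - F x) ∂μg|
      ≤ (⨆ x : Icc (0:ℝ) 1, |G x.1 - F x.1|)
        * (δ * (g δ + f δ) + ∫ x in Ioc δ 1, (g x + f x)) :=
  grenander_stieltjes_term_bound_general f g F G δ hδ hfnn hfint hgnn hgint hF hG μf μg hμf hμg
end

section
/- Marshall's lemma: Let F : [0,1] → ℝ be concave and let h : [0,1] → ℝ be a bounded function whose least concave majorant ĥ (the pointwise infimum of all concave functions on [0,1] dominating h) is finite. Then sup_{0 ≤ x ≤ 1} |ĥ(x) − F(x)| ≤ sup_{0 ≤ x ≤ 1} |h(x) − F(x)|. -/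
open MeasureTheory Set Filter

/-- The least concave majorant of `h` on `[0,1]`: the pointwise infimum of all functions that
are concave on `[0,1]` and dominate `h` there. -/
noncomputable def leastConcaveMajorant (h : ℝ → ℝ) (x : ℝ) : ℝ :=
  sInf { y : ℝ | ∃ c : ℝ → ℝ, ConcaveOn ℝ (Icc 0 1) c ∧
    (∀ z ∈ Icc (0:ℝ) 1, h z ≤ c z) ∧ y = c x }

/-! If `h` stays within `S` of the concave function `F`, then `F + S` is a concave majorant
of `h`, so `h ≤ ĥ ≤ F + S`, and `ĥ` stays within `S` of `F` as well. Taking `S = sup |h - F|`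
gives the lemma; that supremum is finite because a concave function on a compact interval is
bounded. -/

section ConcaveBounds

variable {f : ℝ → ℝ} {a b x : ℝ}

/-- Concavity at the centre of `[a, b]`, the midpoint of `x` and its reflection `a + b - x`. -/
theorem ConcaveOn.le_two_mul_sub_min_of_mem_Icc (hf : ConcaveOn ℝ (Icc a b) f)
    (hx : x ∈ Icc a b) : f x ≤ 2 * f ((a + b) / 2) - min (f a) (f b) := by
  have hab : a ≤ b := hx.1.trans hx.2
  have hx' : a + b - x ∈ Icc a b := ⟨by linarith [hx.2], by linarith [hx.1]⟩
  have hmid := hf.2 hx hx' (by norm_num) (by norm_num) (add_halves (1:ℝ))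
  have hcentre : (1 / 2 : ℝ) • x + (1 / 2 : ℝ) • (a + b - x) = (a + b) / 2 := by
    simp only [smul_eq_mul]; ring
  rw [hcentre, smul_eq_mul, smul_eq_mul] at hmid
  linarith [hf.min_le_of_mem_Icc (left_mem_Icc.2 hab) (right_mem_Icc.2 hab) hx']

theorem ConcaveOn.exists_abs_le_of_mem_Icc (hf : ConcaveOn ℝ (Icc a b) f) :
    ∃ K, ∀ x ∈ Icc a b, |f x| ≤ K := by
  refine ⟨max |min (f a) (f b)| |2 * f ((a + b) / 2) - min (f a) (f b)|, fun x hx => ?_⟩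
  have hab : a ≤ b := hx.1.trans hx.2
  exact abs_le_max_abs_abs (hf.min_le_of_mem_Icc (left_mem_Icc.2 hab) (right_mem_Icc.2 hab) hx)
    (hf.le_two_mul_sub_min_of_mem_Icc hx)

end ConcaveBounds

section LeastConcaveMajorant

variable {h c : ℝ → ℝ} {x : ℝ}

theorem leastConcaveMajorant_le (hc : ConcaveOn ℝ (Icc 0 1) c)
    (hhc : ∀ z ∈ Icc (0:ℝ) 1, h z ≤ c z) (hx : x ∈ Icc (0:ℝ) 1) :
    leastConcaveMajorant h x ≤ c x := by
  refine csInf_le ⟨h x, ?_⟩ ⟨c, hc, hhc, rfl⟩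
  rintro y ⟨c', -, hhc', rfl⟩
  exact hhc' x hx

theorem le_leastConcaveMajorant (hc : ConcaveOn ℝ (Icc 0 1) c)
    (hhc : ∀ z ∈ Icc (0:ℝ) 1, h z ≤ c z) (hx : x ∈ Icc (0:ℝ) 1) :
    h x ≤ leastConcaveMajorant h x := by
  refine le_csInf ⟨c x, c, hc, hhc, rfl⟩ ?_
  rintro y ⟨c', -, hhc', rfl⟩
  exact hhc' x hx

theorem abs_leastConcaveMajorant_sub_le {F : ℝ → ℝ} {S : ℝ} (hF : ConcaveOn ℝ (Icc 0 1) F)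
    (hS : ∀ z ∈ Icc (0:ℝ) 1, |h z - F z| ≤ S) (hx : x ∈ Icc (0:ℝ) 1) :
    |leastConcaveMajorant h x - F x| ≤ S := by
  have hFS : ConcaveOn ℝ (Icc 0 1) (fun z => F z + S) :=
    hF.add (concaveOn_const S (convex_Icc 0 1))
  have hmaj : ∀ z ∈ Icc (0:ℝ) 1, h z ≤ F z + S := fun z hz => by
    linarith [(abs_le.1 (hS z hz)).2]
  refine abs_le.2 ⟨?_, ?_⟩
  · linarith [le_leastConcaveMajorant hFS hmaj hx, (abs_le.1 (hS x hx)).1]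
  · linarith [leastConcaveMajorant_le hFS hmaj hx]

end LeastConcaveMajorant

/-- **Marshall's lemma (inequality (2.19)).** If `F` is concave on `[0,1]` and `h` is bounded
on `[0,1]`, then the least concave majorant `ĥ` of `h` satisfies
`sup_{0≤x≤1} |ĥ(x) − F(x)| ≤ sup_{0≤x≤1} |h(x) − F(x)|`. -/
theorem marshall_lemma
    (F h : ℝ → ℝ)
    (hF : ConcaveOn ℝ (Icc 0 1) F)
    (hb : ∃ M : ℝ, ∀ x ∈ Icc (0:ℝ) 1, |h x| ≤ M) :
    (⨆ x : Icc (0:ℝ) 1, |leastConcaveMajorant h x.1 - F x.1|)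
      ≤ ⨆ x : Icc (0:ℝ) 1, |h x.1 - F x.1| := by
  obtain ⟨M, hM⟩ := hb
  obtain ⟨K, hK⟩ := hF.exists_abs_le_of_mem_Icc
  have hbdd : BddAbove (range fun x : Icc (0:ℝ) 1 => |h x.1 - F x.1|) := by
    refine ⟨M + K, ?_⟩
    rintro _ ⟨x, rfl⟩
    exact (abs_sub _ _).trans (add_le_add (hM x.1 x.2) (hK x.1 x.2))
  have : Nonempty (Icc (0:ℝ) 1) := ⟨⟨0, left_mem_Icc.2 zero_le_one⟩⟩
  exact ciSup_le fun x =>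
    abs_leastConcaveMajorant_sub_le hF (fun z hz => le_ciSup hbdd ⟨z, hz⟩) x.2
end
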